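/- arXiv:1411.1805 — 5 statements merged into one kernel-verified Lean document; each statement's English description precedes it below -/
import Mathlib

section
/- Let X be a random variable on [0,1]^p with positive density, and let f : [0,1]^p → ℝ be square-integrable. The minimizers (μ*, f*_1, …, f*_p) of E[(f(X) − μ − Σ_k f_k(X_k))²] over μ ∈ ℝ and measurable functions f_k with E[f_k(X_k)] = 0 satisfy μ* = E[f(X)] and, for each k, f*_k(x_k) = E[f(X) − Σ_{k'≠k} f*_{k'}(X_{k'}) | X_k = x_k] − E[f(X)], and this solution is unique (up to almost-everywhere equality). -/
/-!
The objective is a quadratic functional on `L²(μ)`, so a minimizer is characterised by the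
orthogonality of its residual `R = f - c - ∑ₖ gₖ(Xₖ)` to every feasible direction. Perturbing `c`
gives `E R = 0`, hence `c = E f`; perturbing `gₖ` by a centred `h(Xₖ)` gives `E[R h(Xₖ)] = 0` for
all square-integrable `h`, i.e. `E[R | Xₖ] = 0`, which is the backfitting equation.

For uniqueness, orthogonality turns the objective of a second minimizer `g'` into that of `g` plus
`E[(∑ₖ (g'ₖ - gₖ)(Xₖ))²]`, so the additive parts agree a.e. Since the density is positive on the
cube, `μ` has the same null sets as the uniform product measure, and under a product measure an
additive function that vanishes a.e. has a.e. constant components (freeze all coordinates but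
one); the mean-zero constraint forces these constants to vanish.
-/

open MeasureTheory Set Finset
open scoped ENNReal

/-- The squared-error objective of the additive approximation. -/
noncomputable def addObj {p : ℕ} (μ : Measure (Fin p → ℝ)) (f : (Fin p → ℝ) → ℝ)
    (c : ℝ) (g : Fin p → ℝ → ℝ) : ℝ :=
  ∫ x, (f x - c - ∑ k, g k (x k)) ^ 2 ∂μ

/-- Feasible component functions: measurable, square-integrable, mean zero. -/
def AddFeasible {p : ℕ} (μ : Measure (Fin p → ℝ)) (g : Fin p → ℝ → ℝ) : Prop :=
  ∀ k, Measurable (g k) ∧ MemLp (fun x => g k (x k)) 2 μ ∧ (∫ x, g k (x k) ∂μ) = 0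

section L2
variable {α : Type*} [MeasurableSpace α] {μ : Measure α} {r h : α → ℝ}

theorem integral_sub_mul_sq (hr : MemLp r 2 μ) (hh : MemLp h 2 μ) (t : ℝ) :
    ∫ x, (r x - t * h x) ^ 2 ∂μ
      = ∫ x, r x ^ 2 ∂μ - 2 * t * ∫ x, r x * h x ∂μ + t ^ 2 * ∫ x, h x ^ 2 ∂μ := by
  have hr2 := hr.integrable_sq
  have hh2 := hh.integrable_sq
  have hrh : Integrable (fun x => r x * h x) μ := hr.integrable_mul hh
  have hlin : Integrable (fun x => r x ^ 2 - 2 * t * (r x * h x)) μ := hr2.sub (hrh.const_mul _)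
  calc ∫ x, (r x - t * h x) ^ 2 ∂μ
      = ∫ x, (r x ^ 2 - 2 * t * (r x * h x)) + t ^ 2 * h x ^ 2 ∂μ := by
        congr 1 with x; ring
    _ = _ := by
        rw [integral_add hlin (hh2.const_mul _), integral_sub hr2 (hrh.const_mul _),
          integral_const_mul, integral_const_mul]

theorem integral_mul_eq_zero_of_forall_integral_sq_le (hr : MemLp r 2 μ) (hh : MemLp h 2 μ)
    (hmin : ∀ t : ℝ, ∫ x, r x ^ 2 ∂μ ≤ ∫ x, (r x - t * h x) ^ 2 ∂μ) :
    ∫ x, r x * h x ∂μ = 0 := by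
  have hdisc : discrim (∫ x, h x ^ 2 ∂μ) (-2 * ∫ x, r x * h x ∂μ) 0 ≤ 0 :=
    discrim_le_zero fun t => by
      have := hmin t
      rw [integral_sub_mul_sq hr hh] at this
      linarith
  rw [discrim] at hdisc
  nlinarith [sq_nonneg (∫ x, r x * h x ∂μ)]

end L2

theorem MeasureTheory.Measure.exists_ae_eq_const_of_ae_sum_eq_zero {p : ℕ} {α : Fin p → Type*}
    [∀ i, MeasurableSpace (α i)] (ν : ∀ i, Measure (α i)) [∀ i, IsProbabilityMeasure (ν i)]
    {D : ∀ i, α i → ℝ} (h : ∀ᵐ x ∂Measure.pi ν, ∑ i, D i (x i) = 0) (k : Fin p) :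
    ∃ c, ∀ᵐ x ∂Measure.pi ν, D k (x k) = c := by
  obtain ⟨n, rfl⟩ : ∃ n, p = n + 1 := Nat.exists_eq_succ_of_ne_zero k.pos.ne'
  have hsplit : ∀ᵐ q ∂(ν k).prod (Measure.pi fun j => ν (k.succAbove j)),
      D k q.1 + ∑ j, D (k.succAbove j) (q.2 j) = 0 := by
    filter_upwards [(measurePreserving_piFinSuccAbove ν k).symm.quasiMeasurePreserving.ae h]
      with q hq
    simpa [Fin.sum_univ_succAbove _ k, Fin.insertNth_apply_same,
      Fin.insertNth_apply_succAbove] using hq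
  -- For a.e. `s`, `D k s` equals minus the remaining sum at a.e. `y`; compare with a fixed `s₀`.
  have hfib := Measure.ae_ae_of_ae_prod hsplit
  obtain ⟨s₀, hs₀⟩ := hfib.exists
  refine ⟨D k s₀,
    (Measure.tendsto_eval_ae_ae (i := k)).eventually (p := fun s => D k s = D k s₀) ?_⟩
  filter_upwards [hfib] with s hs
  obtain ⟨y, hy, hy₀⟩ := (hs.and hs₀).exists
  linarith

theorem volume_restrict_Icc_eq_pi {ι : Type*} [Fintype ι] (a b : ι → ℝ) :
    volume.restrict (Icc a b) = Measure.pi fun i => volume.restrict (Icc (a i) (b i)) := by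
  rw [← Set.pi_univ_Icc, volume_pi, Measure.restrict_pi_pi]

theorem restrict_absolutelyContinuous_withDensity {α : Type*} [MeasurableSpace α]
    {ν : Measure α} {s : Set α} (hs : MeasurableSet s) {d : α → ℝ≥0∞} (hd : Measurable d)
    (hpos : ∀ x ∈ s, 0 < d x) : ν.restrict s ≪ (ν.restrict s).withDensity d :=
  withDensity_absolutelyContinuous' hd.aemeasurable
    ((ae_restrict_mem hs).mono fun x hx => (hpos x hx).ne')

def IsAddMinimizer {p : ℕ} (μ : Measure (Fin p → ℝ)) (f : (Fin p → ℝ) → ℝ) (c : ℝ)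
    (g : Fin p → ℝ → ℝ) : Prop :=
  AddFeasible μ g ∧ ∀ c' g', AddFeasible μ g' → addObj μ f c g ≤ addObj μ f c' g'

variable {p : ℕ} {μ : Measure (Fin p → ℝ)} {f : (Fin p → ℝ) → ℝ} {c : ℝ}
  {g g' h : Fin p → ℝ → ℝ}

theorem addObj_add_smul (t : ℝ) :
    addObj μ f c (g + t • h)
      = ∫ x, ((f x - c - ∑ j, g j (x j)) - t * ∑ j, h j (x j)) ^ 2 ∂μ := by
  unfold addObj
  congr 1 with x
  simp only [Pi.add_apply, Pi.smul_apply, smul_eq_mul, Finset.sum_add_distrib, Finset.mul_sum]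
  ring

theorem Fintype.sum_pi_single_apply_apply {ι α β : Type*} [Fintype ι] [DecidableEq ι]
    [AddCommMonoid β] (k : ι) (h₀ : α → β) (x : ι → α) :
    ∑ j, Pi.single (M := fun _ => α → β) k h₀ j (x j) = h₀ (x k) := by
  rw [Fintype.sum_eq_single k fun j hj => by simp [hj]]
  simp

namespace AddFeasible

theorem memLp_sum (hg : AddFeasible μ g) : MemLp (fun x => ∑ j, g j (x j)) 2 μ :=
  memLp_finsetSum _ fun k _ => (hg k).2.1

theorem integral_sum [IsFiniteMeasure μ] (hg : AddFeasible μ g) :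
    ∫ x, ∑ j, g j (x j) ∂μ = 0 := by
  rw [integral_finsetSum _ fun k _ => (hg k).2.1.integrable one_le_two]
  exact Finset.sum_eq_zero fun k _ => (hg k).2.2

theorem add_smul [IsFiniteMeasure μ] (hg : AddFeasible μ g) (hh : AddFeasible μ h) (t : ℝ) :
    AddFeasible μ (g + t • h) := fun k =>
  ⟨(hg k).1.add ((hh k).1.const_mul t), (hg k).2.1.add ((hh k).2.1.const_mul t), by
    simp only [Pi.add_apply, Pi.smul_apply, smul_eq_mul]
    rw [integral_add ((hg k).2.1.integrable one_le_two)
      (((hh k).2.1.const_mul t).integrable one_le_two), integral_const_mul, (hg k).2.2,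
      (hh k).2.2]
    ring⟩

theorem sub [IsFiniteMeasure μ] (hg' : AddFeasible μ g') (hg : AddFeasible μ g) :
    AddFeasible μ (g' - g) := by
  simpa [sub_eq_add_neg] using hg'.add_smul hg (-1)

theorem memLp_residual [IsFiniteMeasure μ] (hg : AddFeasible μ g) (hf : MemLp f 2 μ) (c : ℝ) :
    MemLp (fun x => f x - c - ∑ j, g j (x j)) 2 μ :=
  (hf.sub (memLp_const c)).sub hg.memLp_sum

theorem single (k : Fin p) {h₀ : ℝ → ℝ} (hm : Measurable h₀)
    (h2 : MemLp (fun x => h₀ (x k)) 2 μ) (h0 : ∫ x, h₀ (x k) ∂μ = 0) :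
    AddFeasible μ (Pi.single k h₀) := by
  intro j
  rcases eq_or_ne j k with rfl | hj
  · simpa using ⟨hm, h2, h0⟩
  · simpa [hj] using measurable_zero

end AddFeasible

theorem AddFeasible.ae_eq_of_ae_sum_sub_eq_zero [IsProbabilityMeasure μ] {ν : Fin p → Measure ℝ}
    [∀ i, IsProbabilityMeasure (ν i)] (hμν : μ ≪ Measure.pi ν) (hνμ : Measure.pi ν ≪ μ)
    (hg : AddFeasible μ g) (hg' : AddFeasible μ g')
    (hsum : ∀ᵐ x ∂μ, ∑ k, (g' k (x k) - g k (x k)) = 0) (k : Fin p) :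
    (fun x => g' k (x k)) =ᵐ[μ] fun x => g k (x k) := by
  obtain ⟨a, ha⟩ := Measure.exists_ae_eq_const_of_ae_sum_eq_zero ν
    (D := fun k s => g' k s - g k s) (hνμ.ae_le hsum) k
  have hμa : ∀ᵐ x ∂μ, g' k (x k) - g k (x k) = a := hμν.ae_le ha
  have ha0 : a = 0 := by
    have hint := integral_congr_ae hμa
    rw [integral_sub ((hg' k).2.1.integrable one_le_two) ((hg k).2.1.integrable one_le_two),
      (hg' k).2.2, (hg k).2.2, integral_const] at hint
    simpa using hint.symm
  filter_upwards [hμa] with x hx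
  linarith

namespace IsAddMinimizer

section Finite

variable [IsFiniteMeasure μ]

theorem integral_residual (hmin : IsAddMinimizer μ f c g) (hf : MemLp f 2 μ) :
    ∫ x, (f x - c - ∑ j, g j (x j)) ∂μ = 0 := by
  simpa using integral_mul_eq_zero_of_forall_integral_sq_le (hmin.1.memLp_residual hf c)
    (memLp_const 1) fun t => by
      have hle := hmin.2 (c + t) g hmin.1
      unfold addObj at hle
      convert hle using 3 with x
      ring

theorem integral_residual_mul (hmin : IsAddMinimizer μ f c g) (hf : MemLp f 2 μ)
    (hh : AddFeasible μ h) :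
    ∫ x, (f x - c - ∑ j, g j (x j)) * ∑ j, h j (x j) ∂μ = 0 :=
  integral_mul_eq_zero_of_forall_integral_sq_le (hmin.1.memLp_residual hf c) hh.memLp_sum
    fun t => by
      rw [← addObj_add_smul]
      exact hmin.2 c _ (hmin.1.add_smul hh t)

theorem addObj_eq_add_integral_sq (hmin : IsAddMinimizer μ f c g) (hf : MemLp f 2 μ)
    (hg' : AddFeasible μ g') :
    addObj μ f c g' = addObj μ f c g + ∫ x, (∑ k, (g' - g) k (x k)) ^ 2 ∂μ := by
  have hdir := hg'.sub hmin.1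
  have hexpand := addObj_add_smul (μ := μ) (f := f) (c := c) (g := g) (h := g' - g) 1
  rw [one_smul, add_sub_cancel, integral_sub_mul_sq (hmin.1.memLp_residual hf c) hdir.memLp_sum,
    hmin.integral_residual_mul hf hdir] at hexpand
  rw [hexpand, addObj]
  ring

theorem ae_sum_sub_eq_zero (hmin : IsAddMinimizer μ f c g) (hmin' : IsAddMinimizer μ f c g')
    (hf : MemLp f 2 μ) : ∀ᵐ x ∂μ, ∑ k, (g' k (x k) - g k (x k)) = 0 := by
  have hdir := hmin'.1.sub hmin.1
  have hsq : ∫ x, (∑ k, (g' - g) k (x k)) ^ 2 ∂μ = 0 := by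
    have hpyth := hmin.addObj_eq_add_integral_sq hf hmin'.1
    exact le_antisymm (by linarith [hmin'.2 c g hmin.1]) (integral_nonneg fun _ => sq_nonneg _)
  filter_upwards [(integral_eq_zero_iff_of_nonneg (fun x => sq_nonneg _)
    hdir.memLp_sum.integrable_sq).mp hsq] with x hx
  simpa using hx

end Finite

section Probability

variable [IsProbabilityMeasure μ]

theorem const_eq_integral (hmin : IsAddMinimizer μ f c g) (hf : MemLp f 2 μ) :
    c = ∫ x, f x ∂μ := by
  have hmean := hmin.integral_residual hf
  have hfc : Integrable (fun x => f x - c) μ := (hf.integrable one_le_two).sub (integrable_const c)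
  rw [integral_sub hfc (hmin.1.memLp_sum.integrable one_le_two), hmin.1.integral_sum,
    integral_sub (hf.integrable one_le_two) (integrable_const c)] at hmean
  simp only [integral_const, probReal_univ, one_smul, sub_zero] at hmean
  linarith

theorem integral_residual_mul_comp (hmin : IsAddMinimizer μ f c g) (hf : MemLp f 2 μ) (k : Fin p)
    {h₀ : ℝ → ℝ} (hm : Measurable h₀) (h2 : MemLp (fun x => h₀ (x k)) 2 μ) :
    ∫ x, (f x - c - ∑ j, g j (x j)) * h₀ (x k) ∂μ = 0 := by
  -- Centring `h₀` makes it a feasible direction; its mean then contributes `m * E R = 0`.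
  set m := ∫ x, h₀ (x k) ∂μ
  have hcentered : AddFeasible μ (Pi.single k fun s => h₀ s - m) :=
    AddFeasible.single k (hm.sub_const m) (h2.sub (memLp_const m)) (by
      rw [integral_sub (h2.integrable one_le_two) (integrable_const m)]
      simp [m])
  have horth := hmin.integral_residual_mul hf hcentered
  have hRi := (hmin.1.memLp_residual hf c).integrable one_le_two
  have hRh : Integrable (fun x => (f x - c - ∑ j, g j (x j)) * h₀ (x k)) μ :=
    (hmin.1.memLp_residual hf c).integrable_mul h2
  simp only [Fintype.sum_pi_single_apply_apply, mul_sub] at horth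
  rwa [integral_sub hRh (hRi.mul_const m),
    integral_mul_const, hmin.integral_residual hf, zero_mul, sub_zero] at horth

theorem setIntegral_residual_preimage (hmin : IsAddMinimizer μ f c g) (hf : MemLp f 2 μ) (k : Fin p)
    {A : Set ℝ} (hA : MeasurableSet A) :
    ∫ x in (fun y => y k) ⁻¹' A, (f x - c - ∑ j, g j (x j)) ∂μ = 0 := by
  have hS : MeasurableSet ((fun y : Fin p → ℝ => y k) ⁻¹' A) := measurable_pi_apply k hA
  have hind : (fun x : Fin p → ℝ => A.indicator 1 (x k)) = ((fun y => y k) ⁻¹' A).indicator 1 :=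
    funext fun x => (Set.indicator_comp_right (g := (1 : ℝ → ℝ)) _).symm
  have horth := hmin.integral_residual_mul_comp hf k (measurable_one.indicator hA)
    (hind ▸ (memLp_const 1).indicator hS)
  rw [← integral_indicator hS, ← horth]
  congr 1 with x
  by_cases hx : x k ∈ A <;> simp [hx]

theorem condExp_residual_ae_eq_zero (hmin : IsAddMinimizer μ f c g) (hf : MemLp f 2 μ) (k : Fin p) :
    μ[fun x => f x - c - ∑ j, g j (x j) |
      MeasurableSpace.comap (fun y : Fin p → ℝ => y k) inferInstance] =ᵐ[μ] 0 := by
  refine (ae_eq_condExp_of_forall_setIntegral_eq (measurable_pi_apply k).comap_le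
    ((hmin.1.memLp_residual hf c).integrable one_le_two) (fun _ _ _ => integrableOn_zero) ?_
    aestronglyMeasurable_const).symm
  rintro _ ⟨A, hA, rfl⟩ _
  simp [hmin.setIntegral_residual_preimage hf k hA]

theorem ae_eq_condExp_sub (hmin : IsAddMinimizer μ f c g) (hf : MemLp f 2 μ) (k : Fin p) :
    (fun x => g k (x k))
      =ᵐ[μ] fun x =>
        (μ[(fun y => f y - ∑ k' ∈ Finset.univ.erase k, g k' (y k')) |
            MeasurableSpace.comap (fun y : Fin p → ℝ => y k) inferInstance]) x - c := by
  have hle := (measurable_pi_apply (X := fun _ : Fin p => ℝ) k).comap_le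
  have hB : StronglyMeasurable[MeasurableSpace.comap (fun y : Fin p → ℝ => y k) inferInstance]
      fun y => c + g k (y k) :=
    (((hmin.1 k).1.comp (Measurable.of_comap_le le_rfl)).const_add c).stronglyMeasurable
  have hBi : Integrable (fun y => c + g k (y k)) μ :=
    (integrable_const c).add ((hmin.1 k).2.1.integrable one_le_two)
  have hsplit : (fun y => f y - ∑ k' ∈ Finset.univ.erase k, g k' (y k'))
      = (fun x => f x - c - ∑ j, g j (x j)) + fun y => c + g k (y k) := by
    ext y
    rw [Pi.add_apply, ← Finset.add_sum_erase _ _ (Finset.mem_univ k)]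
    ring
  rw [hsplit]
  filter_upwards [condExp_add ((hmin.1.memLp_residual hf c).integrable one_le_two) hBi _,
    hmin.condExp_residual_ae_eq_zero hf k] with x hadd hzero
  rw [hadd, Pi.add_apply, hzero, condExp_of_stronglyMeasurable hle hB hBi]
  simp

end Probability

end IsAddMinimizer

theorem backfitting_characterization_general (p : ℕ) (dens : (Fin p → ℝ) → ℝ≥0∞)
    (hdenspos : ∀ x ∈ Icc (0 : Fin p → ℝ) 1, 0 < dens x) (hdensmeas : Measurable dens)
    (μ : Measure (Fin p → ℝ))
    (hμ : μ = (volume.restrict (Icc (0 : Fin p → ℝ) 1)).withDensity dens)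
    (hprob : IsProbabilityMeasure μ)
    (f : (Fin p → ℝ) → ℝ) (hf : MemLp f 2 μ)
    (cstar : ℝ) (gstar : Fin p → ℝ → ℝ)
    (hfeas : AddFeasible μ gstar)
    (hmin : ∀ (c : ℝ) (g : Fin p → ℝ → ℝ), AddFeasible μ g →
      addObj μ f cstar gstar ≤ addObj μ f c g) :
    cstar = (∫ x, f x ∂μ)
    ∧ (∀ k : Fin p,
        (fun x => gstar k (x k))
          =ᵐ[μ] fun x =>
            (μ[(fun y => f y - ∑ k' ∈ Finset.univ.erase k, gstar k' (y k')) |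
                MeasurableSpace.comap (fun y : Fin p → ℝ => y k) inferInstance]) x
              - ∫ y, f y ∂μ)
    ∧ (∀ (c' : ℝ) (g' : Fin p → ℝ → ℝ), AddFeasible μ g' →
        (∀ (c : ℝ) (g : Fin p → ℝ → ℝ), AddFeasible μ g →
          addObj μ f c' g' ≤ addObj μ f c g) →
        c' = cstar ∧ ∀ k, (fun x => g' k (x k)) =ᵐ[μ] fun x => gstar k (x k)) := by
  have hstar : IsAddMinimizer μ f cstar gstar := ⟨hfeas, hmin⟩
  have hc := hstar.const_eq_integral hf
  refine ⟨hc, fun k => hc ▸ hstar.ae_eq_condExp_sub hf k, fun c' g' hfeas' hmin' => ?_⟩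
  have hstar' : IsAddMinimizer μ f c' g' := ⟨hfeas', hmin'⟩
  obtain rfl : c' = cstar := (hstar'.const_eq_integral hf).trans hc.symm
  have : IsProbabilityMeasure (volume.restrict (Icc (0 : ℝ) 1)) := ⟨by simp⟩
  have hvol := volume_restrict_Icc_eq_pi (0 : Fin p → ℝ) 1
  simp only [Pi.zero_apply, Pi.one_apply] at hvol
  refine ⟨rfl, hfeas.ae_eq_of_ae_sum_sub_eq_zero (ν := fun _ => volume.restrict (Icc 0 1))
    ?_ ?_ hfeas' (hstar.ae_sum_sub_eq_zero hstar' hf)⟩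
  · rw [hμ, ← hvol]
    exact withDensity_absolutelyContinuous _ _
  · rw [hμ, ← hvol]
    exact restrict_absolutelyContinuous_withDensity measurableSet_Icc hdensmeas hdenspos

/-- Population backfitting characterization (Lemma 1): for `X` with a positive
density on `[0,1]^p` and square-integrable `f`, any minimizer `(c⋆, g⋆)` of
`E (f(X) - c - ∑ₖ gₖ(Xₖ))²` over mean-zero components satisfies `c⋆ = E f(X)`
and `g⋆ₖ(Xₖ) = E[f(X) - ∑_{k'≠k} g⋆_{k'}(X_{k'}) | Xₖ] - E f(X)` a.e., and the
minimizer is unique up to a.e. equality. -/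
theorem backfitting_characterization (p : ℕ) (dens : (Fin p → ℝ) → ℝ≥0∞)
    (hdenspos : ∀ x ∈ Icc (0 : Fin p → ℝ) 1, 0 < dens x) (hdensmeas : Measurable dens)
    (μ : Measure (Fin p → ℝ))
    (hμ : μ = (volume.restrict (Icc (0 : Fin p → ℝ) 1)).withDensity dens)
    (hprob : IsProbabilityMeasure μ)
    (f : (Fin p → ℝ) → ℝ) (hfmeas : Measurable f) (hf : MemLp f 2 μ)
    (cstar : ℝ) (gstar : Fin p → ℝ → ℝ)
    (hfeas : AddFeasible μ gstar)
    (hmin : ∀ (c : ℝ) (g : Fin p → ℝ → ℝ), AddFeasible μ g →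
      addObj μ f cstar gstar ≤ addObj μ f c g) :
    cstar = (∫ x, f x ∂μ)
    ∧ (∀ k : Fin p,
        (fun x => gstar k (x k))
          =ᵐ[μ] fun x =>
            (μ[(fun y => f y - ∑ k' ∈ Finset.univ.erase k, gstar k' (y k')) |
                MeasurableSpace.comap (fun y : Fin p → ℝ => y k) inferInstance]) x
              - ∫ y, f y ∂μ)
    ∧ (∀ (c' : ℝ) (g' : Fin p → ℝ → ℝ), AddFeasible μ g' →
        (∀ (c : ℝ) (g : Fin p → ℝ → ℝ), AddFeasible μ g →
          addObj μ f c' g' ≤ addObj μ f c g) →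
        c' = cstar ∧ ∀ k, (fun x => g' k (x k)) =ᵐ[μ] fun x => gstar k (x k)) :=
  backfitting_characterization_general p dens hdenspos hdensmeas μ hμ hprob f hf cstar gstar hfeas
    hmin
end

section
/- With H = [[1.6, 2],[2, 5]] (a positive definite matrix) and the bivariate Gaussian of the previous setup with α = −1/2, the optimal additive component f*_1 is identically zero; hence the quadratic convex function f(x) = xᵀHx + c is not additively faithful under this Gaussian distribution. -/
lemma Matrix.dotProduct_mulVec_fin_two {R : Type*} [CommRing R] (a b d : R) (x : Fin 2 → R) :
    dotProduct x (Matrix.mulVec (Matrix.of ![![a, b], ![b, d]]) x) =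
      a * x 0 ^ 2 + 2 * b * x 0 * x 1 + d * x 1 ^ 2 := by
  simp only [dotProduct, Matrix.mulVec, Fin.sum_univ_two, Matrix.of_apply, Matrix.cons_val_zero,
    Matrix.cons_val_one]
  ring

lemma Matrix.posDef_of_fin_two {a b d : ℝ} (ha : 0 < a) (hdet : b ^ 2 < a * d) :
    (Matrix.of ![![a, b], ![b, d]]).PosDef := by
  refine Matrix.posDef_iff_dotProduct_mulVec.mpr ⟨?_, fun x hx => ?_⟩
  · ext i j
    fin_cases i <;> fin_cases j <;> rfl
  · rw [star_trivial, Matrix.dotProduct_mulVec_fin_two]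
    have hx' : x 0 ≠ 0 ∨ x 1 ≠ 0 := by
      by_contra! h
      exact hx (funext fun i => by fin_cases i <;> simp [h.1, h.2])
    -- completing the square: `a · xᵀMx = (a x₀ + b x₁)² + (ad - b²) x₁²`
    have hsum : 0 < (a * x 0 + b * x 1) ^ 2 + (a * d - b ^ 2) * x 1 ^ 2 := by
      rcases eq_or_ne (x 1) 0 with h1 | h1
      · have h0 : x 0 ≠ 0 := hx'.resolve_right (not_not.mpr h1)
        rw [h1, zero_pow two_ne_zero, mul_zero, mul_zero, add_zero, add_zero]
        exact sq_pos_of_ne_zero (mul_ne_zero ha.ne' h0)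
      · exact add_pos_of_nonneg_of_pos (sq_nonneg _)
          (mul_pos (sub_pos.mpr hdet) (sq_pos_of_ne_zero h1))
    refine pos_of_mul_pos_right ?_ ha.le
    linear_combination hsum

/-- With `H = [[1.6, 2],[2, 5]]` (positive definite) and the bivariate Gaussian
with correlation `α = -1/2`, the closed-form coefficient of the optimal additive
component `f*₁` vanishes, i.e. `f*₁ ≡ 0`, although the convex quadratic
`f(x) = xᵀHx + c` depends on `x₁`: additive faithfulness fails. -/
theorem gaussian_unfaithfulness_example :
    let H11 : ℝ := 1.6; let H12 : ℝ := 2; let H22 : ℝ := 5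
    let α : ℝ := -1/2
    let T₁ : ℝ := H11 + 2 * H12 * α + H22 * α ^ 2
    let T₂ : ℝ := H22 + 2 * H12 * α + H11 * α ^ 2
    (Matrix.PosDef (Matrix.of ![![H11, H12], ![H12, H22]]))
    ∧ (T₁ - T₂ * α ^ 2) / (1 - α ^ 4) = 0
    ∧ (∀ c : ℝ, ∃ x₂ : ℝ, ∃ a b : ℝ,
        H11 * a ^ 2 + 2 * H12 * a * x₂ + H22 * x₂ ^ 2 + c
          ≠ H11 * b ^ 2 + 2 * H12 * b * x₂ + H22 * x₂ ^ 2 + c) := by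
  intro H11 H12 H22 α T₁ T₂
  refine ⟨Matrix.posDef_of_fin_two (by norm_num) (by norm_num), by norm_num [T₁, T₂, α],
    fun c => ⟨0, 1, 0, by norm_num [H11]⟩⟩
end

section
/- Let f : [0,1]^p → ℝ be twice continuously differentiable and let p(x) be a density on [0,1]^p such that ∂_{x_k} p(x_{-k}|x_k) and ∂²_{x_k} p(x_{-k}|x_k) are continuous. Let φ(x_{-k}) be a continuous function not depending on x_k. Then h*_k(x_k) := E[f(X) − φ(X_{-k}) | X_k = x_k] is twice differentiable and its second derivative is bounded below (bounded away from −∞) on [0,1]. -/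
/-!
Differentiate twice under the integral sign: by the product rule the integrand
`(f t y - φ y) * q t y` has continuous first and second partial derivatives in `t`, which are
bounded on the compact set `[t - 1, t + 1] × [0, 1]^m` and so dominate the difference quotients.
The second derivative `h''` is again a parametric integral of a continuous function, hence
continuous and bounded below on `[0, 1]`.
-/

open MeasureTheory Set

def HasContinuousPartialDeriv {Y E : Type*} [TopologicalSpace Y] [NormedAddCommGroup E]
    [NormedSpace ℝ E] (G G' : ℝ → Y → E) : Prop :=
  Continuous (Function.uncurry G) ∧ Continuous (Function.uncurry G') ∧
    ∀ y t, HasDerivAt (G · y) (G' t y) t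

namespace HasContinuousPartialDeriv

variable {Y E 𝔸 : Type*} [TopologicalSpace Y] [NormedAddCommGroup E] [NormedSpace ℝ E]
  [NormedRing 𝔸] [NormedAlgebra ℝ 𝔸]

theorem add {G G' H H' : ℝ → Y → E} (hG : HasContinuousPartialDeriv G G')
    (hH : HasContinuousPartialDeriv H H') :
    HasContinuousPartialDeriv (fun t y => G t y + H t y) (fun t y => G' t y + H' t y) :=
  ⟨hG.1.add hH.1, hG.2.1.add hH.2.1, fun y t => (hG.2.2 y t).add (hH.2.2 y t)⟩

theorem sub_const {G G' : ℝ → Y → E} (hG : HasContinuousPartialDeriv G G') {φ : Y → E}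
    (hφ : Continuous φ) : HasContinuousPartialDeriv (fun t y => G t y - φ y) G' :=
  ⟨hG.1.sub (hφ.comp continuous_snd), hG.2.1, fun y t => (hG.2.2 y t).sub_const (φ y)⟩

theorem mul {G G' H H' : ℝ → Y → 𝔸} (hG : HasContinuousPartialDeriv G G')
    (hH : HasContinuousPartialDeriv H H') :
    HasContinuousPartialDeriv (fun t y => G t y * H t y)
      (fun t y => G' t y * H t y + G t y * H' t y) :=
  ⟨hG.1.mul hH.1, (hG.2.1.mul hH.1).add (hG.1.mul hH.2.1),
    fun y t => (hG.2.2 y t).mul (hH.2.2 y t)⟩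

variable [MeasurableSpace Y] [OpensMeasurableSpace Y] {μ : Measure Y}
  [IsFiniteMeasureOnCompacts μ] {K : Set Y}

theorem hasDerivAt_setIntegral {G G' : ℝ → Y → E} (hG : HasContinuousPartialDeriv G G')
    (hK : IsCompact K) (hKm : MeasurableSet K) (t : ℝ) :
    HasDerivAt (fun s => ∫ y in K, G s y ∂μ) (∫ y in K, G' t y ∂μ) t := by
  obtain ⟨hGc, hG'c, hderiv⟩ := hG
  have hmeas : ∀ {H : ℝ → Y → E}, Continuous (Function.uncurry H) → ∀ s,
      AEStronglyMeasurable (H s) (μ.restrict K) := fun hH s =>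
    (hH.uncurry_left s).continuousOn.aestronglyMeasurable_of_isCompact hK hKm
  obtain ⟨C, hC⟩ := ((isCompact_closedBall t 1).prod hK).exists_bound_of_continuousOn
    hG'c.continuousOn
  refine (hasDerivAt_integral_of_dominated_loc_of_deriv_le (bound := fun _ => C)
    (Metric.ball_mem_nhds t one_pos)
    (.of_forall (hmeas hGc)) ((hGc.uncurry_left t).continuousOn.integrableOn_compact' hK hKm)
    (hmeas hG'c t) ?_
    (integrableOn_const hK.measure_lt_top.ne) (.of_forall fun y s _ => hderiv y s)).2
  filter_upwards [ae_restrict_mem hKm] with y hy s hs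
  exact hC (s, y) ⟨Metric.ball_subset_closedBall hs, hy⟩

end HasContinuousPartialDeriv

section PartialDeriv

variable {E F : Type*} [NormedAddCommGroup E] [NormedSpace ℝ E] [NormedAddCommGroup F]
  [NormedSpace ℝ F]

noncomputable def partialDerivFst (f : ℝ → E → F) (t : ℝ) (y : E) : F :=
  fderiv ℝ (Function.uncurry f) (t, y) (1, 0)

theorem contDiff_partialDerivFst {f : ℝ → E → F} {n : WithTop ℕ∞}
    (hf : ContDiff ℝ (n + 1) (Function.uncurry f)) :
    ContDiff ℝ n (Function.uncurry (partialDerivFst f)) :=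
  (hf.fderiv_right le_rfl).clm_apply contDiff_const

theorem hasContinuousPartialDeriv_partialDerivFst {f : ℝ → E → F}
    (hf : ContDiff ℝ 1 (Function.uncurry f)) :
    HasContinuousPartialDeriv f (partialDerivFst f) := by
  refine ⟨hf.continuous, (contDiff_partialDerivFst (n := 0) hf).continuous, fun y t => ?_⟩
  exact ((hf.differentiable one_ne_zero (t, y)).hasFDerivAt).comp_hasDerivAt t
    ((hasDerivAt_id t).prodMk (hasDerivAt_const t y))

end PartialDeriv

/-- Lemma A.1: if `f` is twice continuously differentiable, the conditional density
`q(t, y) = p(x_{-k} = y | x_k = t)` has continuous first and second partial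
derivatives in `t`, and `φ` is continuous (not depending on `x_k`), then
`h⋆(t) = E[f(X) - φ(X_{-k}) | X_k = t] = ∫ (f(t,y) - φ(y)) q(t,y) dy`
is twice differentiable on `[0,1]` with second derivative bounded below. -/
theorem conditional_mean_twice_differentiable (m : ℕ)
    (f : ℝ → (Fin m → ℝ) → ℝ)
    (hf : ContDiff ℝ 2 (Function.uncurry f))
    (φ : (Fin m → ℝ) → ℝ) (hφ : Continuous φ)
    (q q' q'' : ℝ → (Fin m → ℝ) → ℝ)
    (hq : Continuous (Function.uncurry q))
    (hq' : Continuous (Function.uncurry q'))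
    (hq'' : Continuous (Function.uncurry q''))
    (hqderiv : ∀ (y : Fin m → ℝ) (t : ℝ), HasDerivAt (fun s => q s y) (q' t y) t)
    (hq'deriv : ∀ (y : Fin m → ℝ) (t : ℝ), HasDerivAt (fun s => q' s y) (q'' t y) t)
    (h : ℝ → ℝ)
    (hdef : ∀ t : ℝ,
      h t = ∫ y in Icc (0 : Fin m → ℝ) 1, (f t y - φ y) * q t y) :
    ∃ h' h'' : ℝ → ℝ,
      (∀ t ∈ Icc (0:ℝ) 1, HasDerivAt h (h' t) t)
      ∧ (∀ t ∈ Icc (0:ℝ) 1, HasDerivAt h' (h'' t) t)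
      ∧ ∃ L : ℝ, ∀ t ∈ Icc (0:ℝ) 1, L ≤ h'' t := by
  have hq₁ : HasContinuousPartialDeriv q q' := ⟨hq, hq', hqderiv⟩
  have hq₂ : HasContinuousPartialDeriv q' q'' := ⟨hq', hq'', hq'deriv⟩
  have hf₁ := (hasContinuousPartialDeriv_partialDerivFst (hf.of_le one_le_two)).sub_const hφ
  have hf₂ := hasContinuousPartialDeriv_partialDerivFst
    (contDiff_partialDerivFst (n := 1) (by simpa [one_add_one_eq_two] using hf))
  have hG := hf₁.mul hq₁
  have hG' := (hf₂.mul hq₁).add (hf₁.mul hq₂)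
  have hK : IsCompact (Icc (0 : Fin m → ℝ) 1) := isCompact_Icc
  refine ⟨_, _, fun t _ => ?_,
    fun t _ => hG'.hasDerivAt_setIntegral (μ := volume) hK measurableSet_Icc t, ?_⟩
  · rw [funext hdef]
    exact hG.hasDerivAt_setIntegral hK measurableSet_Icc t
  · obtain ⟨L, hL⟩ := isCompact_Icc.bddBelow_image
      (continuous_parametric_integral_of_continuous (μ := volume) hG'.2.1 hK).continuousOn
    exact ⟨L, fun t ht => hL (mem_image_of_mem _ ht)⟩
end

section
/- Let p(x) be a strictly positive density on [0,1]^p and let φ(x) = Σ_{j=1}^p φ_j(x_j) be an additive function with each φ_j bounded and E[φ_j(X_j)] = 0. If E[φ_j(X_j)²] > 0 for some j, then E[φ(X)²] > 0. -/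
/-!
If `∑ₖ φₖ(xₖ)` vanished `μ`-a.e., positivity of the density would make it vanish a.e. for the
uniform measure on the cube, which is a product measure. Resampling the `j`-th coordinate
independently shows that `φⱼ(xⱼ) = -∑_{k ≠ j} φₖ(xₖ)` is then a.e. constant; being centred, the
constant is `0`, contradicting `E[φⱼ(Xⱼ)²] > 0`.
-/

open MeasureTheory Set Finset
open scoped ENNReal

section UpdateTrick

variable {ι α : Type*} [Fintype ι] [DecidableEq ι] [MeasurableSpace α]
  (μ : ι → Measure α) [∀ i, IsProbabilityMeasure (μ i)]

theorem measurePreserving_update_snd (j : ι) :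
    MeasurePreserving (fun xy : (ι → α) × (ι → α) ↦ Function.update xy.1 j (xy.2 j))
      ((Measure.pi μ).prod (Measure.pi μ)) (Measure.pi μ) := by
  have hcoord : ∀ i, MeasurePreserving (fun z : α × α ↦ if i = j then z.2 else z.1)
      ((μ i).prod (μ i)) (μ i) := fun i ↦ by
    by_cases hi : i = j
    · simpa [hi] using measurePreserving_snd (μ := μ i) (ν := μ i)
    · simpa [hi] using measurePreserving_fst (μ := μ i) (ν := μ i)
  have := (measurePreserving_pi _ _ hcoord).comp
    (measurePreserving_arrowProdEquivProdArrow α α ι μ μ).symm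
  convert this using 1
  ext xy i
  rcases eq_or_ne i j with rfl | hi <;>
    simp [*, MeasurableEquiv.arrowProdEquivProdArrow, Equiv.arrowProdEquivProdArrow]

variable {μ}

theorem exists_ae_eq_const_of_ae_eq_of_update_eq {β : Type*} {j : ι} {g : α → β}
    {h : (ι → α) → β} (hh : ∀ x t, h (Function.update x j t) = h x)
    (hgh : ∀ᵐ x ∂Measure.pi μ, g (x j) = h x) :
    ∃ c, ∀ᵐ x ∂Measure.pi μ, g (x j) = c := by
  have hresampled : ∀ᵐ xy : (ι → α) × (ι → α) ∂(Measure.pi μ).prod (Measure.pi μ),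
      g (xy.2 j) = h xy.1 := by
    filter_upwards
      [(measurePreserving_update_snd μ j).quasiMeasurePreserving.tendsto_ae.eventually hgh]
      with xy hxy
    simpa [hh] using hxy
  obtain ⟨x₀, hx₀⟩ := (Measure.ae_ae_of_ae_prod hresampled).exists
  exact ⟨h x₀, hx₀⟩

theorem exists_ae_eq_const_of_sum_ae_eq_zero {M : Type*} [AddCommGroup M] {φ : ι → α → M}
    (hφ : ∀ᵐ x ∂Measure.pi μ, ∑ k, φ k (x k) = 0) (j : ι) :
    ∃ c, ∀ᵐ x ∂Measure.pi μ, φ j (x j) = c := by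
  refine exists_ae_eq_const_of_ae_eq_of_update_eq
    (h := fun x ↦ -∑ k ∈ univ.erase j, φ k (x k)) (fun x t ↦ ?_) ?_
  · refine congrArg _ (sum_congr rfl fun k hk ↦ ?_)
    rw [Function.update_of_ne (ne_of_mem_erase hk)]
  · filter_upwards [hφ] with x hx
    rw [← add_sum_erase _ _ (mem_univ j)] at hx
    exact eq_neg_of_add_eq_zero_left hx

end UpdateTrick

theorem volume_restrict_Icc_pi {ι : Type*} [Fintype ι] (a b : ι → ℝ) :
    volume.restrict (Icc a b) = Measure.pi fun i ↦ volume.restrict (Icc (a i) (b i)) := by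
  rw [← pi_univ_Icc, volume_pi, Measure.restrict_pi_pi]

/-- Nontrivial centered additive functions are nonzero in `L²`: if `X` has a
strictly positive density on `[0,1]^p`, each `φⱼ` is bounded, measurable and
mean zero, and some component has positive second moment, then the additive
function `φ(x) = ∑ⱼ φⱼ(xⱼ)` has positive second moment. -/
theorem additive_uniqueness (p : ℕ) (dens : (Fin p → ℝ) → ℝ≥0∞)
    (hdens : ∀ x ∈ Icc (0 : Fin p → ℝ) 1, 0 < dens x)
    (hmeas : Measurable dens)
    (μ : Measure (Fin p → ℝ))
    (hμ : μ = (volume.restrict (Icc (0 : Fin p → ℝ) 1)).withDensity dens)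
    (hprob : IsProbabilityMeasure μ)
    (φ : Fin p → ℝ → ℝ)
    (hφmeas : ∀ j, Measurable (φ j))
    (hφbdd : ∀ j, ∃ C : ℝ, ∀ t : ℝ, |φ j t| ≤ C)
    (hφmean : ∀ j, ∫ x, φ j (x j) ∂μ = 0)
    (j : Fin p) (hj : 0 < ∫ x, (φ j (x j)) ^ 2 ∂μ) :
    0 < ∫ x, (∑ k, φ k (x k)) ^ 2 ∂μ := by
  set cube := volume.restrict (Icc (0 : Fin p → ℝ) 1)
  have : IsProbabilityMeasure (volume.restrict (Icc (0 : ℝ) 1)) := ⟨by simp⟩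
  have hcube : cube = Measure.pi fun _ ↦ volume.restrict (Icc (0 : ℝ) 1) :=
    volume_restrict_Icc_pi 0 1
  have hcube_ac : cube ≪ μ := hμ ▸ withDensity_absolutelyContinuous' hmeas.aemeasurable
    ((ae_restrict_mem measurableSet_Icc).mono fun x hx ↦ (hdens x hx).ne')
  have hμ_ac : μ ≪ cube := hμ ▸ withDensity_absolutelyContinuous _ _
  choose C hC using hφbdd
  have hint : Integrable (fun x ↦ (∑ k, φ k (x k)) ^ 2) μ := by
    have hmeas_sum : Measurable fun x : Fin p → ℝ ↦ ∑ k, φ k (x k) :=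
      measurable_sum _ fun k _ ↦ (hφmeas k).comp (measurable_pi_apply k)
    refine Integrable.of_bound (hmeas_sum.pow_const 2).aestronglyMeasurable ((∑ k, C k) ^ 2)
      (ae_of_all _ fun x ↦ ?_)
    rw [Real.norm_eq_abs, abs_pow]
    gcongr
    exact (abs_sum_le_sum_abs _ _).trans (sum_le_sum fun k _ ↦ hC k _)
  by_contra! hle
  have hsum : ∀ᵐ x ∂μ, ∑ k, φ k (x k) = 0 := by
    filter_upwards [(integral_eq_zero_iff_of_nonneg (fun _ ↦ sq_nonneg _) hint).1
      (hle.antisymm (integral_nonneg fun _ ↦ sq_nonneg _))] with x hx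
    exact pow_eq_zero_iff two_ne_zero |>.1 hx
  obtain ⟨c, hc⟩ := exists_ae_eq_const_of_sum_ae_eq_zero (hcube ▸ hcube_ac.ae_le hsum) j
  have hcμ : ∀ᵐ x ∂μ, φ j (x j) = c := hμ_ac.ae_le (hcube ▸ hc)
  have hc0 : c = 0 := by simpa [integral_congr_ae hcμ] using hφmean j
  have hsq : ∀ᵐ x ∂μ, φ j (x j) ^ 2 = 0 := hcμ.mono fun x hx ↦ by simp [hx, hc0]
  simp [integral_congr_ae hsq] at hj
end

section
/- Serfling's corollary for sampling without replacement: let x₁,…,x_N be a finite list of reals with mean zero, and let X₁,…,X_n be sampled from the list without replacement, with S_n = Σᵢ Xᵢ, b = max xᵢ, a = min xᵢ. Then P(|S_n/N| ≥ ε) ≤ 2·exp(−2Nε²/(b−a)²). -/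
open Finset Real MeasureTheory ProbabilityTheory
open scoped BigOperators

/-!
Write `S_k` for the sum of the first `k` draws. Given them, the next draw is uniform on the `N - k`
values not yet drawn, whose mean is `-S_k / (N - k)`. So `S_k / (N - k)` is a martingale whose
`(k + 1)`-st increment lies in an interval of length `(b - a) / (N - k - 1)`, and Hoeffding's lemma
bounds its conditional moment generating function. As `(N - n) / (N - k - 1) ≤ 1` for `k < n`,
iterating this for `t (N - n) S_k / (N - k)` gives `𝔼 exp (t S_n) ≤ exp (n t² (b - a)² / 8)`, the
bound for sampling with replacement; a Chernoff bound and `n ≤ N` then give each tail.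
-/

theorem expect_exp_mul_le_of_mem_Icc {ι : Type*} (s : Finset ι) (hs : s.Nonempty) (v : ι → ℝ)
    {a b : ℝ} (hv : ∀ j ∈ s, v j ∈ Set.Icc a b) (t : ℝ) :
    𝔼 j ∈ s, exp (t * v j) ≤ exp (t * 𝔼 j ∈ s, v j + t ^ 2 * (b - a) ^ 2 / 8) := by
  let _ : MeasurableSpace s := ⊤
  have _ : Nonempty s := hs.to_subtype
  have integral_eq (f : ι → ℝ) :
      ∫ j : s, f j ∂(PMF.uniformOfFintype s).toMeasure = 𝔼 j ∈ s, f j := by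
    rw [PMF.integral_eq_sum, expect_eq_sum_div_card, ← sum_coe_sort s, sum_div]
    simp [div_eq_inv_mul]
  have hoeffding := (hasSubgaussianMGF_of_mem_Icc (X := fun j : s => v j)
    (μ := (PMF.uniformOfFintype s).toMeasure)
    Measurable.of_discrete.aemeasurable (ae_of_all _ fun j => hv j j.2)).mgf_le t
  have hc : (((‖b - a‖₊ / 2) ^ 2 : NNReal) : ℝ) * t ^ 2 / 2 = t ^ 2 * (b - a) ^ 2 / 8 := by
    rw [NNReal.coe_pow, NNReal.coe_div, NNReal.coe_ofNat, coe_nnnorm, norm_eq_abs, div_pow, sq_abs]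
    ring
  rw [mgf, integral_eq v, hc] at hoeffding
  simp_rw [mul_sub, exp_sub, integral_div, integral_eq (fun j => exp (t * v j))] at hoeffding
  rwa [exp_add, ← div_le_iff₀' (exp_pos _)]

def sampleSum {N : ℕ} (x : Fin N → ℝ) (k : ℕ) (σ : Equiv.Perm (Fin N)) : ℝ :=
  ∑ i ∈ univ.filter (fun i : Fin N => (i : ℕ) < k), x (σ i)

section SampleSum

variable {N : ℕ} (x : Fin N → ℝ) (σ : Equiv.Perm (Fin N))

lemma sampleSum_zero : sampleSum x 0 σ = 0 := by
  simp [sampleSum]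

lemma sampleSum_of_le {k : ℕ} (hk : N ≤ k) : sampleSum x k σ = ∑ i, x i := by
  rw [sampleSum, filter_true_of_mem fun i _ => i.isLt.trans_le hk, Equiv.sum_comp σ x]

lemma sampleSum_neg (k : ℕ) : sampleSum (-x) k σ = -sampleSum x k σ := by
  simp [sampleSum]

lemma sampleSum_succ {k : ℕ} (hk : k < N) :
    sampleSum x (k + 1) σ = sampleSum x k σ + x (σ ⟨k, hk⟩) := by
  have : univ.filter (fun i : Fin N => (i : ℕ) < k + 1)
      = insert ⟨k, hk⟩ (univ.filter fun i : Fin N => (i : ℕ) < k) := by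
    ext i
    simp only [mem_filter, mem_univ, true_and, mem_insert, Fin.ext_iff]
    omega
  rw [sampleSum, this, sum_insert (by simp), add_comm]
  rfl

lemma sampleSum_mul_swap {k : ℕ} {i j : Fin N} (hi : k ≤ i) (hj : k ≤ j) :
    sampleSum x k (σ * Equiv.swap i j) = sampleSum x k σ := by
  refine sum_congr rfl fun l hl => ?_
  have hl : (l : ℕ) < k := (mem_filter.1 hl).2
  rw [Equiv.Perm.mul_apply, Equiv.swap_apply_of_ne_of_ne] <;>
    · rintro rfl
      omega

lemma sum_Ici_add_sampleSum {k : ℕ} (hk : k < N) :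
    ∑ j ∈ Ici (⟨k, hk⟩ : Fin N), x (σ j) + sampleSum x k σ = ∑ i, x i := by
  rw [← Equiv.sum_comp σ x,
    ← sum_filter_not_add_sum_filter univ fun i : Fin N => (i : ℕ) < k]
  congr 1
  refine sum_congr ?_ fun _ _ => rfl
  ext i
  simp [Fin.le_def]

end SampleSum

section MomentGeneratingFunction

variable {N : ℕ} (x : Fin N → ℝ)

lemma expect_exp_sampleSum_succ {k : ℕ} (hk : k < N) (t : ℝ) :
    𝔼 σ, exp (t * sampleSum x (k + 1) σ)
      = 𝔼 σ, exp (t * sampleSum x k σ)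
          * 𝔼 j ∈ Ici (⟨k, hk⟩ : Fin N), exp (t * x (σ j)) := by
  set p : Fin N := ⟨k, hk⟩
  have swap_draw : ∀ j ∈ Ici p, 𝔼 σ, exp (t * sampleSum x (k + 1) σ)
      = 𝔼 σ, exp (t * sampleSum x k σ) * exp (t * x (σ j)) := fun j hj =>
    Fintype.expect_equiv (Equiv.mulRight (Equiv.swap p j)) _ _ fun σ => by
      rw [Equiv.coe_mulRight, sampleSum_succ x _ hk,
        sampleSum_mul_swap x σ (i := p) le_rfl (Fin.le_def.1 (mem_Ici.1 hj)),
        Equiv.Perm.mul_apply, Equiv.swap_apply_right, mul_add, exp_add]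
  calc 𝔼 σ, exp (t * sampleSum x (k + 1) σ)
      = 𝔼 j ∈ Ici p, 𝔼 σ, exp (t * sampleSum x (k + 1) σ) :=
        (expect_const nonempty_Ici _).symm
    _ = 𝔼 j ∈ Ici p, 𝔼 σ, exp (t * sampleSum x k σ) * exp (t * x (σ j)) :=
        expect_congr rfl swap_draw
    _ = _ := by simp_rw [expect_comm (Ici p), mul_expect]

variable {x} (hmean : ∑ i, x i = 0) {a b : ℝ} (ha : ∀ i, a ≤ x i) (hb : ∀ i, x i ≤ b)
include hmean ha hb

lemma expect_exp_mul_Ici_le (σ : Equiv.Perm (Fin N)) {k : ℕ} (hk : k < N) (t : ℝ) :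
    𝔼 j ∈ Ici (⟨k, hk⟩ : Fin N), exp (t * x (σ j))
      ≤ exp (t * (-sampleSum x k σ / (N - k)) + t ^ 2 * (b - a) ^ 2 / 8) := by
  have hmean_Ici : 𝔼 j ∈ Ici (⟨k, hk⟩ : Fin N), x (σ j) = -sampleSum x k σ / (N - k) := by
    rw [expect_eq_sum_div_card, Fin.card_Ici, Nat.cast_sub hk.le,
      eq_neg_of_add_eq_zero_left ((sum_Ici_add_sampleSum x σ hk).trans hmean)]
  exact hmean_Ici ▸ expect_exp_mul_le_of_mem_Icc (Ici (⟨k, hk⟩ : Fin N)) nonempty_Ici _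
    (fun j _ => ⟨ha (σ j), hb (σ j)⟩) t

lemma expect_exp_sampleSum_succ_le {k : ℕ} (hk : k + 1 < N) (l : ℝ) :
    𝔼 σ, exp (l / (N - (k + 1)) * sampleSum x (k + 1) σ)
      ≤ exp ((l / (N - (k + 1))) ^ 2 * (b - a) ^ 2 / 8)
        * 𝔼 σ, exp (l / (N - k) * sampleSum x k σ) := by
  have hNk : (N : ℝ) - (k + 1) ≠ 0 := by
    rw [sub_ne_zero]
    exact_mod_cast hk.ne'
  have hNk0 : (N : ℝ) - k ≠ 0 := by
    rw [sub_ne_zero]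
    exact_mod_cast (k.lt_succ_self.trans hk).ne'
  set t := l / (N - (k + 1) : ℝ)
  rw [expect_exp_sampleSum_succ x (k.lt_succ_self.trans hk) t, mul_expect]
  refine expect_le_expect fun σ _ => ?_
  calc exp (t * sampleSum x k σ) * 𝔼 j ∈ Ici (⟨k, _⟩ : Fin N), exp (t * x (σ j))
      ≤ exp (t * sampleSum x k σ)
          * exp (t * (-sampleSum x k σ / (N - k)) + t ^ 2 * (b - a) ^ 2 / 8) := by
        gcongr
        exact expect_exp_mul_Ici_le hmean ha hb σ _ t
    _ = exp (t ^ 2 * (b - a) ^ 2 / 8) * exp (l / (N - k) * sampleSum x k σ) := by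
        rw [← exp_add, ← exp_add]
        congr 1
        simp only [t]
        field_simp
        ring

lemma expect_exp_weighted_sampleSum_le {n : ℕ} (hn : n < N) (t : ℝ) {k : ℕ} (hk : k ≤ n) :
    𝔼 σ, exp (t * (N - n) / (N - k) * sampleSum x k σ)
      ≤ exp (k * (t ^ 2 * (b - a) ^ 2 / 8)) := by
  induction k with
  | zero => simp [sampleSum_zero]
  | succ k ih =>
    have hNn : (0 : ℝ) < N - n := sub_pos.2 (by exact_mod_cast hn)
    have hweight : (t * (N - n) / (N - (k + 1))) ^ 2 ≤ t ^ 2 := by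
      have hkn : (N : ℝ) - n ≤ N - (k + 1) := by
        gcongr
        exact_mod_cast hk
      rw [mul_div_assoc, mul_pow]
      have hpos : (0 : ℝ) < N - (k + 1) := hNn.trans_le hkn
      exact mul_le_of_le_one_right (sq_nonneg t)
        (pow_le_one₀ (div_nonneg hNn.le hpos.le) (div_le_one_of_le₀ hkn hpos.le))
    calc 𝔼 σ, exp (t * (N - n) / (N - (k + 1 : ℕ)) * sampleSum x (k + 1) σ)
        ≤ exp ((t * (N - n) / (N - (k + 1))) ^ 2 * (b - a) ^ 2 / 8)
          * 𝔼 σ, exp (t * (N - n) / (N - k) * sampleSum x k σ) := by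
          push_cast
          exact expect_exp_sampleSum_succ_le hmean ha hb (by omega) _
      _ ≤ exp (t ^ 2 * (b - a) ^ 2 / 8) * exp (k * (t ^ 2 * (b - a) ^ 2 / 8)) := by
          gcongr
          exact ih (by omega)
      _ = exp ((k + 1 : ℕ) * (t ^ 2 * (b - a) ^ 2 / 8)) := by
          rw [← exp_add]
          push_cast
          ring_nf

theorem expect_exp_sampleSum_le {n : ℕ} (hn : n < N) (t : ℝ) :
    𝔼 σ, exp (t * sampleSum x n σ) ≤ exp (n * (t ^ 2 * (b - a) ^ 2 / 8)) := by
  have hNn : (N : ℝ) - n ≠ 0 := by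
    rw [sub_ne_zero]
    exact_mod_cast hn.ne'
  simpa [mul_div_assoc, div_self hNn] using
    expect_exp_weighted_sampleSum_le hmean ha hb hn t le_rfl

end MomentGeneratingFunction

lemma card_filter_le_le_exp_mul_sum {α : Type*} (s : Finset α) (f : α → ℝ) (c : ℝ) {t : ℝ}
    (ht : 0 ≤ t) : (#{a ∈ s | c ≤ f a} : ℝ) ≤ exp (-(t * c)) * ∑ a ∈ s, exp (t * f a) := by
  rw [mul_sum]
  calc (#{a ∈ s | c ≤ f a} : ℝ) = ∑ a ∈ s with c ≤ f a, 1 := by simp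
    _ ≤ ∑ a ∈ s with c ≤ f a, exp (-(t * c)) * exp (t * f a) :=
        sum_le_sum fun a ha => by
          rw [← exp_add, one_le_exp_iff]
          nlinarith [(mem_filter.1 ha).2]
    _ ≤ ∑ a ∈ s, exp (-(t * c)) * exp (t * f a) :=
        sum_le_sum_of_subset_of_nonneg (filter_subset _ _) fun _ _ _ => by positivity

section TailBounds

variable {N n : ℕ} (hn : n < N) {x : Fin N → ℝ} (hmean : ∑ i, x i = 0) {a b : ℝ}
  (ha : ∀ i, a ≤ x i) (hb : ∀ i, x i ≤ b) (hab : a < b) {ε : ℝ} (hε : 0 ≤ ε)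
include hn hmean ha hb hab hε

lemma card_le_sampleSum_le :
    (#{σ | N * ε ≤ sampleSum x n σ} : ℝ)
      ≤ N.factorial * exp (-2 * N * ε ^ 2 / (b - a) ^ 2) := by
  -- the Chernoff parameter `t = 4ε/(b-a)²` optimises the bound for `n = N`
  set t := 4 * ε / (b - a) ^ 2
  have hsum :
      ∑ σ, exp (t * sampleSum x n σ) ≤ N.factorial * exp (n * (t ^ 2 * (b - a) ^ 2 / 8)) := by
    rw [← Fintype.card_smul_expect, Fintype.card_perm, Fintype.card_fin, nsmul_eq_mul]
    gcongr
    exact expect_exp_sampleSum_le hmean ha hb hn t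
  have hexponent :
      -(t * (N * ε)) + n * (t ^ 2 * (b - a) ^ 2 / 8) ≤ -2 * N * ε ^ 2 / (b - a) ^ 2 := by
    have hNn : (0 : ℝ) ≤ N - n := sub_nonneg.2 (by exact_mod_cast hn.le)
    have gap : -2 * N * ε ^ 2 / (b - a) ^ 2 - (-(t * (N * ε)) + n * (t ^ 2 * (b - a) ^ 2 / 8))
        = 2 * ε ^ 2 * (N - n) / (b - a) ^ 2 := by
      simp only [t]
      field_simp
      ring
    rw [← sub_nonneg, gap]
    positivity
  calc (#{σ | N * ε ≤ sampleSum x n σ} : ℝ)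
      ≤ exp (-(t * (N * ε))) * ∑ σ, exp (t * sampleSum x n σ) :=
        card_filter_le_le_exp_mul_sum _ _ _ (by positivity)
    _ ≤ exp (-(t * (N * ε))) * (N.factorial * exp (n * (t ^ 2 * (b - a) ^ 2 / 8))) := by gcongr
    _ ≤ N.factorial * exp (-2 * N * ε ^ 2 / (b - a) ^ 2) := by
        rw [mul_left_comm, ← exp_add]
        gcongr

lemma card_le_abs_sampleSum_le :
    (#{σ | N * ε ≤ |sampleSum x n σ|} : ℝ)
      ≤ 2 * (N.factorial * exp (-2 * N * ε ^ 2 / (b - a) ^ 2)) := by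
  have hupper := card_le_sampleSum_le hn hmean ha hb hab hε
  have hlower := card_le_sampleSum_le hn (x := -x) (a := -b) (b := -a)
    (by simp [sum_neg_distrib, hmean]) (fun i => neg_le_neg (hb i)) (fun i => neg_le_neg (ha i))
    (neg_lt_neg hab) hε
  simp only [sampleSum_neg, neg_sub_neg] at hlower
  calc (#{σ | N * ε ≤ |sampleSum x n σ|} : ℝ)
      ≤ #{σ | N * ε ≤ sampleSum x n σ} + #{σ | N * ε ≤ -sampleSum x n σ} := by
        rw [filter_congr fun σ _ => le_abs, filter_or]
        exact_mod_cast card_union_le _ _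
    _ ≤ _ := by linarith

end TailBounds

theorem serfling_corollary_general (N n : ℕ)
    (x : Fin N → ℝ) (hmean : ∑ i, x i = 0) (a b : ℝ)
    (ha : ∀ i, a ≤ x i) (hb : ∀ i, x i ≤ b) (ε : ℝ) (hε : 0 < ε) :
    (Nat.card {σ : Equiv.Perm (Fin N) //
        ε ≤ |(∑ i ∈ Finset.univ.filter (fun i : Fin N => (i : ℕ) < n), x (σ i)) / N|} : ℝ)
      / (Nat.card (Equiv.Perm (Fin N)))
      ≤ 2 * Real.exp (-2 * N * ε ^ 2 / (b - a) ^ 2) := by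
  change (Nat.card {σ // ε ≤ |sampleSum x n σ / N|} : ℝ) / _ ≤ _
  obtain hn | hNn := lt_or_ge n N
  · obtain hab | rfl := ((ha ⟨0, by omega⟩).trans (hb _)).lt_or_eq
    · have hN : (0 : ℝ) < N := by exact_mod_cast (Nat.zero_le n).trans_lt hn
      have hevent : ∀ σ, ε ≤ |sampleSum x n σ / N| ↔ N * ε ≤ |sampleSum x n σ| := fun σ => by
        rw [abs_div, Nat.abs_cast, le_div_iff₀ hN, mul_comm]
      rw [Nat.card_eq_fintype_card, Fintype.card_subtype, Nat.card_perm, Nat.card_fin,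
        div_le_iff₀ (by positivity), filter_congr fun σ _ => hevent σ]
      linarith [card_le_abs_sampleSum_le hn hmean ha hb hab hε.le]
    · calc _ ≤ (1 : ℝ) :=
            div_le_one_of_le₀ (mod_cast Finite.card_subtype_le _) (Nat.cast_nonneg _)
        _ ≤ _ := by norm_num
  · have hempty : IsEmpty {σ // ε ≤ |sampleSum x n σ / N|} := ⟨fun σ =>
      hε.not_ge (by simpa [sampleSum_of_le x σ.1 hNn, hmean] using σ.2)⟩
    rw [Nat.card_of_isEmpty, Nat.cast_zero, zero_div]
    positivity

/-- Serfling's corollary for sampling without replacement: if `x₁,…,x_N` has mean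
zero, `a = min xᵢ`, `b = max xᵢ`, and `X₁,…,X_n` are sampled from the list without
replacement (modeled by a uniformly random permutation `σ`, `Sₙ = ∑_{i<n} x (σ i)`),
then `P(|Sₙ/N| ≥ ε) ≤ 2 exp(-2Nε²/(b-a)²)`, the probability being the uniform
measure on permutations. -/
theorem serfling_corollary (N n : ℕ) (hN : 0 < N) (hn : n ≤ N)
    (x : Fin N → ℝ) (hmean : ∑ i, x i = 0) (a b : ℝ)
    (ha : ∀ i, a ≤ x i) (hb : ∀ i, x i ≤ b) (ε : ℝ) (hε : 0 < ε) :
    (Nat.card {σ : Equiv.Perm (Fin N) //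
        ε ≤ |(∑ i ∈ Finset.univ.filter (fun i : Fin N => (i : ℕ) < n), x (σ i)) / N|} : ℝ)
      / (Nat.card (Equiv.Perm (Fin N)))
      ≤ 2 * Real.exp (-2 * N * ε ^ 2 / (b - a) ^ 2) :=
  serfling_corollary_general N n x hmean a b ha hb ε hε
end
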